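/- Let $A$ be a real $n \times n$ matrix, $B$ a real $n \times \ell$ matrix, $C$ a real $s \times n$ matrix. Let $V$ be a real $n \times q$ matrix with $V^T V = I_q$, $W$ a real $n \times p$ matrix with $W^T W = I_p$ and $V^T W = 0$. Let $\mathcal{T} = V^T A^T V$, let $E$ be the $q \times p$ matrix of the last $p$ columns of $I_q$, and let $H$ be a $p \times p$ matrix with $A^T V = V \mathcal{T} + W H E^T$. Assume $C^T = V G$ for some $q \times s$ matrix $G$, set $B_q = V^T B$, and let $Y : \mathbb{R} \to \mathbb{R}^{q \times q}$ be differentiable, with $Y(t)$ symmetric for all $t$, satisfying $\dot{Y}(t) = \mathcal{T} Y(t) + Y(t) \mathcal{T}^T - Y(t) B_q B_q^T Y(t) + G G^T$. Define $X_m(t) = V Y(t) V^T$ and the residual $R_m(t) = \dot{X}_m(t) - A^T X_m(t) - X_m(t) A + X_m(t) B B^T X_m(t) - C^T C$. Then the spectral norm of the residual satisfies $\|R_m(t)\|_2 = \|H E^T Y(t)\|_2$ for every $t$, i.e. it equals the spectral norm of the $p \times q$ matrix formed by $H$ times the last $p$ rows of $Y(t)$. -/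

import Mathlib

/-!
The Arnoldi relation `Aᵀ V = V T + W H Eᵀ`, together with `Cᵀ = V G` and the projected
Riccati equation for `Y`, makes everything in the residual that lives in the range of `V`
cancel: with `K = H Eᵀ Y` one gets `Rₘ = -(W K Vᵀ + V Kᵀ Wᵀ)`. Since `V` and `W` have
orthonormal columns and mutually orthogonal ranges, this is the Hermitian dilation
`[[0, K], [Kᵀ, 0]]` seen through the isometry `[W V]`, so its spectral norm is `‖K‖₂`.
-/

open scoped Matrix

attribute [local instance] Matrix.normedAddCommGroup Matrix.normedSpace

/-- The spectral norm of a real matrix: its operator norm as a linear map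
between Euclidean spaces. -/
noncomputable def spectralNorm' {m n : Type*} [Fintype m] [Fintype n] [DecidableEq n]
    (M : Matrix m n ℝ) : ℝ :=
  ‖LinearMap.toContinuousLinearMap (Matrix.toEuclideanLin M)‖

namespace ContinuousLinearMap

open scoped InnerProductSpace

variable {𝕜 E F G : Type*} [RCLike 𝕜]
  [NormedAddCommGroup E] [InnerProductSpace 𝕜 E] [CompleteSpace E]
  [NormedAddCommGroup F] [InnerProductSpace 𝕜 F] [CompleteSpace F]
  [NormedAddCommGroup G] [InnerProductSpace 𝕜 G] [CompleteSpace G]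
  {v : G →L[𝕜] E} {w : F →L[𝕜] E}

theorem norm_map_add_map_sq (hv : adjoint v ∘L v = 1) (hw : adjoint w ∘L w = 1)
    (hvw : adjoint v ∘L w = 0) (a : G) (b : F) :
    ‖v a + w b‖ ^ 2 = ‖a‖ ^ 2 + ‖b‖ ^ 2 := by
  have horth : ⟪v a, w b⟫_𝕜 = 0 := by
    rw [← adjoint_inner_right, ← comp_apply, hvw, zero_apply, inner_zero_right]
  rw [@norm_add_sq 𝕜, horth, map_zero, mul_zero, add_zero,
    (norm_map_iff_adjoint_comp_self v).mpr hv, (norm_map_iff_adjoint_comp_self w).mpr hw]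

theorem norm_sq_adjoint_add_norm_sq_adjoint_le (hv : adjoint v ∘L v = 1)
    (hw : adjoint w ∘L w = 1) (hvw : adjoint v ∘L w = 0) (x : E) :
    ‖adjoint v x‖ ^ 2 + ‖adjoint w x‖ ^ 2 ≤ ‖x‖ ^ 2 := by
  -- `u` is the orthogonal projection of `x` onto `range v ⊕ range w`, and `⟪x, u⟫ = ‖u‖²`.
  set a := adjoint v x
  set b := adjoint w x
  set u := v a + w b
  have hu : ‖u‖ ^ 2 = ‖a‖ ^ 2 + ‖b‖ ^ 2 := norm_map_add_map_sq hv hw hvw a b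
  have hxu : ⟪x, u⟫_𝕜 = ((‖a‖ ^ 2 + ‖b‖ ^ 2 : ℝ) : 𝕜) := by
    simp only [u, inner_add_right, ← adjoint_inner_left, inner_self_eq_norm_sq_to_K, a, b]
    push_cast; ring
  have hcs : ‖u‖ ^ 2 ≤ ‖x‖ * ‖u‖ := by
    have := norm_inner_le_norm (𝕜 := 𝕜) x u
    rwa [hxu, RCLike.norm_ofReal, abs_of_nonneg (by positivity), ← hu] at this
  nlinarith [norm_nonneg u, norm_nonneg x]

theorem norm_comp_comp_adjoint_add_comp_comp_adjoint (hv : adjoint v ∘L v = 1)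
    (hw : adjoint w ∘L w = 1) (hvw : adjoint v ∘L w = 0) (k : G →L[𝕜] F) :
    ‖w ∘L k ∘L adjoint v + v ∘L adjoint k ∘L adjoint w‖ = ‖k‖ := by
  set M := w ∘L k ∘L adjoint v + v ∘L adjoint k ∘L adjoint w
  apply le_antisymm
  · refine opNorm_le_bound _ (norm_nonneg k) fun x => ?_
    have hk := k.le_opNorm (adjoint v x)
    have hk' := (adjoint k).le_opNorm (adjoint w x)
    rw [adjoint.norm_map] at hk'
    have hMx : ‖M x‖ ^ 2 = ‖adjoint k (adjoint w x)‖ ^ 2 + ‖k (adjoint v x)‖ ^ 2 := by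
      rw [← norm_map_add_map_sq hv hw hvw]
      simp only [M, add_apply, comp_apply, add_comm]
    refine (pow_le_pow_iff_left₀ (norm_nonneg _) (by positivity) two_ne_zero).mp ?_
    calc ‖M x‖ ^ 2 = ‖adjoint k (adjoint w x)‖ ^ 2 + ‖k (adjoint v x)‖ ^ 2 := hMx
      _ ≤ ‖k‖ ^ 2 * (‖adjoint v x‖ ^ 2 + ‖adjoint w x‖ ^ 2) := by
        nlinarith [norm_nonneg (adjoint k (adjoint w x)), norm_nonneg (k (adjoint v x))]
      _ ≤ ‖k‖ ^ 2 * ‖x‖ ^ 2 :=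
        mul_le_mul_of_nonneg_left (norm_sq_adjoint_add_norm_sq_adjoint_le hv hw hvw x)
          (by positivity)
      _ = (‖k‖ * ‖x‖) ^ 2 := by ring
  · have hMv : M ∘L v = w ∘L k := by
      have hwv : adjoint w ∘L v = 0 := by rw [← adjoint_adjoint v, ← adjoint_comp, hvw, map_zero]
      simp only [M, add_comp, comp_assoc, hv, hwv, comp_zero, add_zero]
      rfl
    calc ‖k‖ = ‖w ∘L k‖ :=
          (k.opNorm_ext (w ∘L k) fun x => ((norm_map_iff_adjoint_comp_self w).mpr hw _).symm)
      _ = ‖M ∘L v‖ := by rw [hMv]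
      _ ≤ ‖M‖ * ‖v‖ := opNorm_comp_le M v
      _ ≤ ‖M‖ := mul_le_of_le_one_right (norm_nonneg M)
          (opNorm_le_bound _ zero_le_one fun x => by
            rw [(norm_map_iff_adjoint_comp_self v).mpr hv, one_mul])

end ContinuousLinearMap

noncomputable def euclideanCLM {m n : Type*} [Fintype m] [Fintype n] [DecidableEq n] :
    Matrix m n ℝ ≃ₗ[ℝ] (EuclideanSpace ℝ n →L[ℝ] EuclideanSpace ℝ m) :=
  Matrix.toEuclideanLin.trans LinearMap.toContinuousLinearMap

theorem euclideanCLM_mul {l m n : Type*} [Fintype l] [Fintype m] [Fintype n] [DecidableEq l]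
    [DecidableEq n] (M : Matrix m n ℝ) (N : Matrix n l ℝ) :
    euclideanCLM (M * N) = euclideanCLM M ∘L euclideanCLM N := by
  ext x
  simp [euclideanCLM, Matrix.mulVec_mulVec]

theorem euclideanCLM_one {n : Type*} [Fintype n] [DecidableEq n] :
    euclideanCLM (1 : Matrix n n ℝ) = 1 := by
  ext x
  simp [euclideanCLM]

theorem euclideanCLM_transpose {m n : Type*} [Fintype m] [Fintype n] [DecidableEq m]
    [DecidableEq n] (M : Matrix m n ℝ) :
    euclideanCLM Mᵀ = ContinuousLinearMap.adjoint (euclideanCLM M) := by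
  rw [← Matrix.conjTranspose_eq_transpose_of_trivial, euclideanCLM, LinearEquiv.trans_apply,
    Matrix.toEuclideanLin_conjTranspose_eq_adjoint, LinearMap.adjoint_toContinuousLinearMap]
  rfl

theorem spectralNorm'_eq_norm_euclideanCLM {m n : Type*} [Fintype m] [Fintype n]
    [DecidableEq n] (M : Matrix m n ℝ) : spectralNorm' M = ‖euclideanCLM M‖ := rfl

theorem spectralNorm'_neg {m n : Type*} [Fintype m] [Fintype n] [DecidableEq n]
    (M : Matrix m n ℝ) : spectralNorm' (-M) = spectralNorm' M := by
  simp only [spectralNorm'_eq_norm_euclideanCLM, map_neg, norm_neg]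

theorem adjoint_euclideanCLM_comp_self {m n : Type*} [Fintype m] [Fintype n] [DecidableEq m]
    [DecidableEq n] {V : Matrix m n ℝ} (hV : Vᵀ * V = 1) :
    ContinuousLinearMap.adjoint (euclideanCLM V) ∘L euclideanCLM V = 1 := by
  rw [← euclideanCLM_transpose, ← euclideanCLM_mul, hV, euclideanCLM_one]

theorem spectralNorm'_mul_mul_transpose_add {l m n : Type*} [Fintype l] [Fintype m] [Fintype n]
    [DecidableEq l] [DecidableEq m] [DecidableEq n] {V : Matrix m n ℝ} {W : Matrix m l ℝ}
    (hV : Vᵀ * V = 1) (hW : Wᵀ * W = 1) (hVW : Vᵀ * W = 0) (K : Matrix l n ℝ) :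
    spectralNorm' (W * K * Vᵀ + V * Kᵀ * Wᵀ) = spectralNorm' K := by
  have hvw : ContinuousLinearMap.adjoint (euclideanCLM V) ∘L euclideanCLM W = 0 := by
    rw [← euclideanCLM_transpose, ← euclideanCLM_mul, hVW, map_zero]
  simpa only [spectralNorm'_eq_norm_euclideanCLM, map_add, euclideanCLM_mul,
    euclideanCLM_transpose, ContinuousLinearMap.comp_assoc] using
    ContinuousLinearMap.norm_comp_comp_adjoint_add_comp_comp_adjoint
      (adjoint_euclideanCLM_comp_self hV) (adjoint_euclideanCLM_comp_self hW) hvw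
      (euclideanCLM K)

theorem HasDerivAt.matrix_mul_mul {l m n k : Type*} [Fintype l] [Fintype m] [Fintype n]
    [Fintype k] {Y : ℝ → Matrix m n ℝ} {Y' : Matrix m n ℝ} {t : ℝ} (hY : HasDerivAt Y Y' t)
    (P : Matrix l m ℝ) (Q : Matrix n k ℝ) :
    HasDerivAt (fun τ => P * Y τ * Q) (P * Y' * Q) t :=
  (mulRightLinearMap l ℝ Q ∘ₗ mulLeftLinearMap n ℝ P).toContinuousLinearMap
    |>.hasFDerivAt.comp_hasDerivAt t hY

theorem riccati_residual_eq_of_arnoldi {R : Type*} [CommRing R]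
    {k l m n s : Type*} [Fintype k] [Fintype l] [Fintype m] [Fintype n] [Fintype s]
    {A : Matrix m m R} {B : Matrix m l R} {C : Matrix s m R} {V : Matrix m n R}
    {W : Matrix m k R} {T : Matrix n n R} {F : Matrix k n R} {G : Matrix n s R}
    {Y : Matrix n n R} (hArnoldi : Aᵀ * V = V * T + W * F) (hC : Cᵀ = V * G) (hY : Yᵀ = Y) :
    V * (T * Y + Y * Tᵀ - Y * (Vᵀ * B) * (Vᵀ * B)ᵀ * Y + G * Gᵀ) * Vᵀ
        - Aᵀ * (V * Y * Vᵀ) - V * Y * Vᵀ * A + V * Y * Vᵀ * B * Bᵀ * (V * Y * Vᵀ) - Cᵀ * C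
      = -(W * (F * Y) * Vᵀ + V * (F * Y)ᵀ * Wᵀ) := by
  have hA : Vᵀ * A = Tᵀ * Vᵀ + Fᵀ * Wᵀ := by
    simpa [Matrix.transpose_mul] using congrArg Matrix.transpose hArnoldi
  have hC' : C = Gᵀ * Vᵀ := by
    simpa [Matrix.transpose_mul] using congrArg Matrix.transpose hC
  have hAX : Aᵀ * (V * Y * Vᵀ) = (Aᵀ * V) * Y * Vᵀ := by simp only [Matrix.mul_assoc]
  have hXA : V * Y * Vᵀ * A = V * Y * (Vᵀ * A) := by simp only [Matrix.mul_assoc]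
  rw [hAX, hXA, hArnoldi, hA, hC']
  simp only [Matrix.transpose_mul, Matrix.transpose_transpose, hY, Matrix.mul_add,
    Matrix.add_mul, Matrix.mul_sub, Matrix.sub_mul, Matrix.mul_assoc]
  abel

theorem residual_norm_extended_block_arnoldi_general
    {n l s q p : ℕ}
    (A : Matrix (Fin n) (Fin n) ℝ) (B : Matrix (Fin n) (Fin l) ℝ)
    (C : Matrix (Fin s) (Fin n) ℝ)
    (V : Matrix (Fin n) (Fin q) ℝ) (W : Matrix (Fin n) (Fin p) ℝ)
    (hV : Vᵀ * V = 1) (hW : Wᵀ * W = 1) (hVW : Vᵀ * W = 0)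
    (T : Matrix (Fin q) (Fin q) ℝ)
    (E : Matrix (Fin q) (Fin p) ℝ)
    (H : Matrix (Fin p) (Fin p) ℝ)
    (hArnoldi : Aᵀ * V = V * T + W * H * Eᵀ)
    (G : Matrix (Fin q) (Fin s) ℝ) (hC : Cᵀ = V * G)
    (Bq : Matrix (Fin q) (Fin l) ℝ) (hBq : Bq = Vᵀ * B)
    (Y Y' : ℝ → Matrix (Fin q) (Fin q) ℝ)
    (hY : ∀ t, HasDerivAt Y (Y' t) t)
    (hYsymm : ∀ t, (Y t)ᵀ = Y t)
    (hode : ∀ t, Y' t = T * Y t + Y t * Tᵀ - Y t * Bq * Bqᵀ * Y t + G * Gᵀ)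
    (Xm : ℝ → Matrix (Fin n) (Fin n) ℝ) (hXm : ∀ t, Xm t = V * Y t * Vᵀ)
    (Rm : ℝ → Matrix (Fin n) (Fin n) ℝ)
    (hRm : ∀ t, Rm t =
      deriv Xm t - Aᵀ * Xm t - Xm t * A + Xm t * B * Bᵀ * Xm t - Cᵀ * C) :
    ∀ t, spectralNorm' (Rm t) = spectralNorm' (H * Eᵀ * Y t) := by
  intro t
  have hderiv : deriv Xm t = V * Y' t * Vᵀ := by
    rw [funext hXm]
    exact ((hY t).matrix_mul_mul V Vᵀ).deriv
  have hR : Rm t = -(W * (H * Eᵀ * Y t) * Vᵀ + V * (H * Eᵀ * Y t)ᵀ * Wᵀ) := by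
    have hArnoldi' : Aᵀ * V = V * T + W * (H * Eᵀ) := by rw [hArnoldi, Matrix.mul_assoc W]
    rw [hRm, hderiv, hXm, hode, hBq]
    exact riccati_residual_eq_of_arnoldi hArnoldi' hC (hYsymm t)
  rw [hR, spectralNorm'_neg, spectralNorm'_mul_mul_transpose_add hV hW hVW]

/-- In the extended block Arnoldi setting, if `Y` solves the
projected differential Riccati equation and `Y(t)` is symmetric, then the
spectral norm of the residual of `Xₘ(t) = V Y(t) Vᵀ` equals the spectral norm
of `H Eᵀ Y(t)` (that is, `H` times the last `p` rows of `Y(t)`). -/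
theorem residual_norm_extended_block_arnoldi
    {n l s q p : ℕ} (hpq : p ≤ q)
    (A : Matrix (Fin n) (Fin n) ℝ) (B : Matrix (Fin n) (Fin l) ℝ)
    (C : Matrix (Fin s) (Fin n) ℝ)
    (V : Matrix (Fin n) (Fin q) ℝ) (W : Matrix (Fin n) (Fin p) ℝ)
    (hV : Vᵀ * V = 1) (hW : Wᵀ * W = 1) (hVW : Vᵀ * W = 0)
    (T : Matrix (Fin q) (Fin q) ℝ) (hT : T = Vᵀ * Aᵀ * V)
    (E : Matrix (Fin q) (Fin p) ℝ)
    (hE : ∀ i j, E i j = if (i : ℕ) = q - p + (j : ℕ) then 1 else 0)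
    (H : Matrix (Fin p) (Fin p) ℝ)
    (hArnoldi : Aᵀ * V = V * T + W * H * Eᵀ)
    (G : Matrix (Fin q) (Fin s) ℝ) (hC : Cᵀ = V * G)
    (Bq : Matrix (Fin q) (Fin l) ℝ) (hBq : Bq = Vᵀ * B)
    (Y Y' : ℝ → Matrix (Fin q) (Fin q) ℝ)
    (hY : ∀ t, HasDerivAt Y (Y' t) t)
    (hYsymm : ∀ t, (Y t)ᵀ = Y t)
    (hode : ∀ t, Y' t = T * Y t + Y t * Tᵀ - Y t * Bq * Bqᵀ * Y t + G * Gᵀ)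
    (Xm : ℝ → Matrix (Fin n) (Fin n) ℝ) (hXm : ∀ t, Xm t = V * Y t * Vᵀ)
    (Rm : ℝ → Matrix (Fin n) (Fin n) ℝ)
    (hRm : ∀ t, Rm t =
      deriv Xm t - Aᵀ * Xm t - Xm t * A + Xm t * B * Bᵀ * Xm t - Cᵀ * C) :
    ∀ t, spectralNorm' (Rm t) = spectralNorm' (H * Eᵀ * Y t) :=
  residual_norm_extended_block_arnoldi_general A B C V W hV hW hVW T E H hArnoldi G hC Bq hBq Y Y'
    hY hYsymm hode Xm hXm Rm hRm
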